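/- Entropic interpolation between Gaussians for the heat semigroup: fix ε > 0, x0, x1 ∈ ℝⁿ, and let μ0 = N(x0, Id) and μ1 = N(x1, Id). Then there exist measurable f0, g1 : ℝⁿ → [0,∞) solving the Schrödinger system dμ0/dx = f0 · T_ε g1 and dμ1/dx = g1 · T_ε f0 (Lebesgue-a.e.), and the corresponding entropic interpolation μ^ε_t := (T_{εt} f0)(T_{ε(1−t)} g1)·Leb satisfies μ^ε_t = N( (1−t)x0 + t x1 , D^ε_t · Id ) for all t ∈ [0,1], where D^ε_t = α^ε t(1−t) + 1, α^ε = δ²/(1+δ), and δ = (ε − 2 + √(4 + ε²))/2. In particular D^ε_0 = D^ε_1 = 1. -/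

import Mathlib

open MeasureTheory Real Filter Set
open scoped ENNReal Topology

noncomputable section

/-- The heat kernel on ℝⁿ for the generator `Δ/2`. -/
def heatKer (n : ℕ) (t : ℝ) (x y : EuclideanSpace ℝ (Fin n)) : ℝ :=
  (2 * π * t) ^ (-(n : ℝ) / 2) * Real.exp (-‖x - y‖ ^ 2 / (2 * t))

/-- The heat semigroup on ℝⁿ with generator `Δ/2`, reversible with respect to `Leb`. -/
def heatT (n : ℕ) (t : ℝ) (f : EuclideanSpace ℝ (Fin n) → ℝ)
    (x : EuclideanSpace ℝ (Fin n)) : ℝ :=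
  if t = 0 then f x else ∫ y, f y * heatKer n t x y

/-- The density of the Gaussian measure `N(c, v·Id)` on ℝⁿ. -/
def gaussPdf (n : ℕ) (c : EuclideanSpace ℝ (Fin n)) (v : ℝ)
    (x : EuclideanSpace ℝ (Fin n)) : ℝ :=
  (2 * π * v) ^ (-(n : ℝ) / 2) * Real.exp (-‖x - c‖ ^ 2 / (2 * v))

/-- The Gaussian measure `N(c, v·Id)` on ℝⁿ. -/
def gaussM (n : ℕ) (c : EuclideanSpace ℝ (Fin n)) (v : ℝ) :
    Measure (EuclideanSpace ℝ (Fin n)) :=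
  volume.withDensity fun x => ENNReal.ofReal (gaussPdf n c v x)

/-- `δ = (ε − 2 + √(4 + ε²))/2`. -/
def deltaH (eps : ℝ) : ℝ := (eps - 2 + Real.sqrt (4 + eps ^ 2)) / 2

/-- `α^ε = δ²/(1+δ)`. -/
def alphaH (eps : ℝ) : ℝ := deltaH eps ^ 2 / (1 + deltaH eps)

/-- The variance `D^ε_t = α^ε t(1−t) + 1` of the entropic interpolation. -/
def DH (eps t : ℝ) : ℝ := alphaH eps * (t * (1 - t)) + 1

open scoped RealInnerProductSpace

/-- Completing the square for a combination of two quadratic forms. -/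
lemma complete_square {n : ℕ} (b1 b2 : ℝ) (hb : b1 + b2 ≠ 0)
    (p q x : EuclideanSpace ℝ (Fin n)) :
    b1 * ‖x - p‖ ^ 2 + b2 * ‖x - q‖ ^ 2
      = (b1 + b2) * ‖x - (b1 + b2)⁻¹ • (b1 • p + b2 • q)‖ ^ 2
        + (b1 * b2 / (b1 + b2)) * ‖p - q‖ ^ 2 := by
  simp only [norm_sub_sq_real, norm_add_sq_real, real_inner_smul_left, real_inner_smul_right,
    inner_add_right, norm_smul, Real.norm_eq_abs, mul_pow, sq_abs]
  field_simp
  ring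

/-- The Gaussian integral on Euclidean space. -/
lemma gauss_integral {n : ℕ} {β : ℝ} (hβ : 0 < β) (m : EuclideanSpace ℝ (Fin n)) :
    ∫ y : EuclideanSpace ℝ (Fin n), Real.exp (-(β/2) * ‖y - m‖ ^ 2)
      = (2*π/β) ^ ((n:ℝ)/2) := by
  rw [integral_sub_right_eq_self (fun y => Real.exp (-(β/2) * ‖y‖ ^ 2)) m]
  rw [GaussianFourier.integral_rexp_neg_mul_sq_norm (by positivity : (0:ℝ) < β/2)]
  rw [finrank_euclideanSpace_fin]
  congr 1
  field_simp

/-- The heat semigroup applied to a Gaussian function. -/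
lemma heatT_gauss {n : ℕ} {s b : ℝ} (A : ℝ) (hs : 0 ≤ s) (hb : 0 < b)
    (c x : EuclideanSpace ℝ (Fin n)) :
    heatT n s (fun y => A * Real.exp (-(b/2) * ‖y - c‖ ^ 2)) x
      = A * (1 + b*s) ^ (-(n:ℝ)/2) * Real.exp (-((b/(1+b*s))/2) * ‖x - c‖ ^ 2) := by
  rcases eq_or_lt_of_le hs with h0 | hs
  · rw [heatT, if_pos h0.symm, ← h0]
    norm_num
  have hsne : s ≠ 0 := ne_of_gt hs
  have hβ : (0:ℝ) < b + s⁻¹ := by positivity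
  have hbs : (0:ℝ) < 1 + b * s := by positivity
  set β := b + s⁻¹ with hβdef
  set m := β⁻¹ • (b • c + s⁻¹ • x) with hm
  have key : ∀ y : EuclideanSpace ℝ (Fin n),
      A * Real.exp (-(b/2) * ‖y - c‖ ^ 2) * heatKer n s x y
        = (A * (2*π*s) ^ (-(n:ℝ)/2) * Real.exp (-((b/(1+b*s))/2) * ‖x - c‖ ^ 2))
          * Real.exp (-(β/2) * ‖y - m‖ ^ 2) := by
    intro y
    rw [heatKer]
    have hsq : b * ‖y - c‖ ^ 2 + s⁻¹ * ‖y - x‖ ^ 2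
        = β * ‖y - m‖ ^ 2 + (b * s⁻¹ / β) * ‖c - x‖ ^ 2 :=
      complete_square b s⁻¹ (ne_of_gt hβ) c x y
    have hrw : -(b/2) * ‖y - c‖ ^ 2 + (-‖x - y‖ ^ 2 / (2*s))
        = -((b/(1+b*s))/2) * ‖x - c‖ ^ 2 + (-(β/2) * ‖y - m‖ ^ 2) := by
      rw [norm_sub_rev x y, norm_sub_rev x c]
      have h2 : b * s⁻¹ / β = b / (1 + b * s) := by
        rw [hβdef, div_eq_div_iff (by positivity) (by positivity)]; field_simp; ring
      linear_combination (-1/2 : ℝ) * hsq - (‖c - x‖ ^ 2 / 2) * h2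
    calc A * Real.exp (-(b/2) * ‖y - c‖ ^ 2) * ((2*π*s) ^ (-(n:ℝ)/2) * Real.exp (-‖x - y‖ ^ 2 / (2*s)))
        = A * (2*π*s) ^ (-(n:ℝ)/2) * (Real.exp (-(b/2) * ‖y - c‖ ^ 2) * Real.exp (-‖x - y‖ ^ 2 / (2*s))) := by ring
      _ = A * (2*π*s) ^ (-(n:ℝ)/2) * (Real.exp (-((b/(1+b*s))/2) * ‖x - c‖ ^ 2) * Real.exp (-(β/2) * ‖y - m‖ ^ 2)) := by
          rw [← Real.exp_add, ← Real.exp_add, hrw]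
      _ = _ := by ring
  rw [heatT, if_neg hsne]
  simp only [key]
  rw [integral_const_mul, gauss_integral hβ m]
  have hconst : (2*π*s) ^ (-(n:ℝ)/2) * (2*π/β) ^ ((n:ℝ)/2) = (1 + b*s) ^ (-(n:ℝ)/2) := by
    have hd : (2*π/β) = (2*π*s) / (1 + b*s) := by
      rw [hβdef]; field_simp; ring
    rw [hd, Real.div_rpow (by positivity) hbs.le, neg_div, Real.rpow_neg (by positivity : (0:ℝ) ≤ 2*π*s),
      Real.rpow_neg hbs.le]
    field_simp
  calc A * (2*π*s) ^ (-(n:ℝ)/2) * Real.exp (-((b/(1+b*s))/2) * ‖x - c‖ ^ 2) * (2*π/β) ^ ((n:ℝ)/2)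
      = A * ((2*π*s) ^ (-(n:ℝ)/2) * (2*π/β) ^ ((n:ℝ)/2)) * Real.exp (-((b/(1+b*s))/2) * ‖x - c‖ ^ 2) := by ring
    _ = _ := by rw [hconst]

set_option maxHeartbeats 2000000 in
/-- **Entropic interpolation between Gaussians for the heat semigroup**
(Section 6, identity `eq:heat`): for `μ0 = N(x0, Id)` and `μ1 = N(x1, Id)`, the
Schrödinger system for the `ε`-dilated heat semigroup admits a solution `(f0, g1)`,
and the entropic interpolation `μ^ε_t = (T_{εt}f0)(T_{ε(1−t)}g1)·Leb` equals
`N((1−t)x0 + t·x1, D^ε_t·Id)` with `D^ε_t = α^ε t(1−t)+1`, `D^ε_0 = D^ε_1 = 1`. -/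
theorem heat_gaussian_entropic_interpolation (n : ℕ) (hn : 0 < n)
    (eps : ℝ) (heps : 0 < eps) (x0 x1 : EuclideanSpace ℝ (Fin n)) :
    ∃ f0 g1 : EuclideanSpace ℝ (Fin n) → ℝ,
      Measurable f0 ∧ Measurable g1 ∧ (∀ x, 0 ≤ f0 x) ∧ (∀ x, 0 ≤ g1 x) ∧
      (∀ᵐ x ∂(volume : Measure (EuclideanSpace ℝ (Fin n))),
        gaussPdf n x0 1 x = f0 x * heatT n eps g1 x) ∧
      (∀ᵐ x ∂(volume : Measure (EuclideanSpace ℝ (Fin n))),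
        gaussPdf n x1 1 x = g1 x * heatT n eps f0 x) ∧
      (∀ t ∈ Set.Icc (0 : ℝ) 1,
        (volume : Measure (EuclideanSpace ℝ (Fin n))).withDensity
            (fun x => ENNReal.ofReal (heatT n (eps * t) f0 x * heatT n (eps * (1 - t)) g1 x))
          = gaussM n ((1 - t) • x0 + t • x1) (DH eps t)) ∧
      DH eps 0 = 1 ∧ DH eps 1 = 1 := by
  have hDH0 : DH eps 0 = 1 := by simp [DH]
  have hDH1 : DH eps 1 = 1 := by simp [DH]
  set d := deltaH eps with hd
  have h4 : (0:ℝ) ≤ 4 + eps^2 := by positivity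
  have hs2 := Real.sq_sqrt h4
  have hsn := Real.sqrt_nonneg (4 + eps^2)
  have hsqrt : Real.sqrt (4 + eps^2) = 2*d + 2 - eps := by rw [hd, deltaH]; ring
  have hd0 : (0:ℝ) < d := by rw [hd, deltaH]; nlinarith
  have hkey : eps * (1 + d) = d^2 + 2*d := by
    rw [hsqrt] at hs2; nlinarith
  have h2d : (0:ℝ) < 2 + d := by linarith
  have h1d : (0:ℝ) < 1 + d := by linarith
  set a := (1+d)/(2+d) with ha
  have ha0 : 0 < a := by rw [ha]; positivity
  have haeps : a * eps = d := by
    rw [ha, div_mul_eq_mul_div, div_eq_iff (ne_of_gt h2d)]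
    linear_combination hkey
  set p := x0 + d⁻¹ • (x0 - x1) with hp
  set q := x1 + d⁻¹ • (x1 - x0) with hq
  have hdne : d ≠ 0 := ne_of_gt hd0
  have hdiff : p - q = ((2+d)/d) • (x0 - x1) := by
    rw [hp, hq]
    match_scalars <;> field_simp <;> ring
  set C := (1+d)/d^2 * ‖x0 - x1‖^2 with hC
  have hC0 : 0 ≤ C := by rw [hC]; positivity
  set K := (2*π)^(-(n:ℝ)/2) * (1+d)^((n:ℝ)/2) * Real.exp (C/2) with hK
  have hK0 : 0 < K := by rw [hK]; positivity
  set f0 := fun y : EuclideanSpace ℝ (Fin n) =>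
    Real.sqrt K * Real.exp (-(a/2) * ‖y - p‖ ^ 2) with hf0
  set g1 := fun y : EuclideanSpace ℝ (Fin n) =>
    Real.sqrt K * Real.exp (-(a/2) * ‖y - q‖ ^ 2) with hg1
  -- the main pointwise identity
  have main : ∀ t, 0 ≤ t → t ≤ 1 → ∀ x,
      heatT n (eps*t) f0 x * heatT n (eps*(1-t)) g1 x
        = gaussPdf n ((1-t) • x0 + t • x1) (DH eps t) x := by
    intro t ht0 ht1 x
    have h1t : (0:ℝ) < 1 + d*t := by nlinarith
    have h2t : (0:ℝ) < 1 + d*(1-t) := by nlinarith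
    have n1 : (1+d*t) ≠ 0 := ne_of_gt h1t
    have n2 : (1+d*(1-t)) ≠ 0 := ne_of_gt h2t
    have n3 : (2+d) ≠ 0 := ne_of_gt h2d
    have n4 : (1+d) ≠ 0 := ne_of_gt h1d
    have e1 : heatT n (eps*t) f0 x
        = Real.sqrt K * (1+d*t)^(-(n:ℝ)/2)
          * Real.exp (-((a/(1+d*t))/2) * ‖x - p‖ ^ 2) := by
      have h := heatT_gauss (Real.sqrt K) (mul_nonneg heps.le ht0) ha0 p x
      rw [show 1 + a*(eps*t) = 1 + d*t from by rw [← haeps]; ring] at h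
      exact h
    have e2 : heatT n (eps*(1-t)) g1 x
        = Real.sqrt K * (1+d*(1-t))^(-(n:ℝ)/2)
          * Real.exp (-((a/(1+d*(1-t)))/2) * ‖x - q‖ ^ 2) := by
      have h := heatT_gauss (Real.sqrt K) (mul_nonneg heps.le (by linarith : (0:ℝ) ≤ 1 - t)) ha0 q x
      rw [show 1 + a*(eps*(1-t)) = 1 + d*(1-t) from by rw [← haeps]; ring] at h
      exact h
    set b1 := a/(1+d*t) with hb1
    set b2 := a/(1+d*(1-t)) with hb2
    have hb10 : 0 < b1 := div_pos ha0 h1t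
    have hb20 : 0 < b2 := div_pos ha0 h2t
    have hb0 : 0 < b1 + b2 := by linarith
    have hDd : DH eps t = d^2/(1+d)*(t*(1-t)) + 1 := by rw [DH, alphaH, ← hd]
    have htt : 0 ≤ t*(1-t) := mul_nonneg ht0 (by linarith)
    have hDpos : 0 < DH eps t := by
      rw [hDd]
      have : 0 ≤ d^2/(1+d) := by positivity
      nlinarith
    have hDne : DH eps t ≠ 0 := ne_of_gt hDpos
    have hprod : (1+d*t)*(1+d*(1-t)) = (1+d)*DH eps t := by
      rw [hDd]; field_simp; ring
    have hsum : b1 + b2 = (DH eps t)⁻¹ := by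
      have h : (b1 + b2) * DH eps t = 1 := by
        rw [hb1, hb2, hDd, ha]; field_simp; ring
      field_simp at h ⊢
      linarith [h]
    have hmean : (b1+b2)⁻¹ • (b1 • p + b2 • q) = (1-t) • x0 + t • x1 := by
      rw [hsum, inv_inv, hp, hq, hb1, hb2, ha, hDd]
      match_scalars <;> field_simp <;> ring
    have hsq := complete_square b1 b2 (ne_of_gt hb0) p q x
    rw [hmean, hsum] at hsq
    have hnormpq : ‖p - q‖ ^ 2 = ((2+d)/d)^2 * ‖x0 - x1‖ ^ 2 := by
      rw [hdiff, norm_smul, Real.norm_eq_abs, mul_pow, sq_abs]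
    have hfac : b1 * b2 / (DH eps t)⁻¹ * ‖p - q‖ ^ 2 = C := by
      rw [div_eq_mul_inv, inv_inv, hnormpq, hC]
      have hscal : b1 * b2 * DH eps t * ((2+d)/d)^2 = (1+d)/d^2 := by
        rw [hb1, hb2, hDd, ha]; field_simp; ring
      linear_combination ‖x0 - x1‖ ^ 2 * hscal
    rw [hfac] at hsq
    -- hsq : b1 * ‖x-p‖² + b2 * ‖x-q‖² = (DH eps t)⁻¹ * ‖x - mean‖² + C
    have hexp : Real.exp (-(b1/2) * ‖x - p‖ ^ 2) * Real.exp (-(b2/2) * ‖x - q‖ ^ 2)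
        = Real.exp (-‖x - ((1-t) • x0 + t • x1)‖ ^ 2 / (2 * DH eps t)) * Real.exp (-(C/2)) := by
      rw [← Real.exp_add, ← Real.exp_add]
      congr 1
      linear_combination (-1/2 : ℝ) * hsq
    have hpow : (1+d*t)^(-(n:ℝ)/2) * (1+d*(1-t))^(-(n:ℝ)/2)
        = (1+d)^(-(n:ℝ)/2) * (DH eps t)^(-(n:ℝ)/2) := by
      rw [← Real.mul_rpow h1t.le h2t.le, hprod, Real.mul_rpow h1d.le hDpos.le]
    have hconst : K * ((1+d)^(-(n:ℝ)/2) * (DH eps t)^(-(n:ℝ)/2)) * Real.exp (-(C/2))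
        = (2*π*DH eps t)^(-(n:ℝ)/2) := by
      rw [hK]
      have eK1 : Real.exp (C/2) * Real.exp (-(C/2)) = 1 := by
        rw [← Real.exp_add]; norm_num
      have eK2 : ((1:ℝ)+d)^((n:ℝ)/2) * (1+d)^(-(n:ℝ)/2) = 1 := by
        rw [← Real.rpow_add h1d, show (n:ℝ)/2 + -(n:ℝ)/2 = 0 from by ring, Real.rpow_zero]
      have eK3 : (2*π*DH eps t)^(-(n:ℝ)/2) = (2*π)^(-(n:ℝ)/2) * (DH eps t)^(-(n:ℝ)/2) :=
        Real.mul_rpow (by positivity) hDpos.le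
      calc (2*π)^(-(n:ℝ)/2) * (1+d)^((n:ℝ)/2) * Real.exp (C/2)
            * ((1+d)^(-(n:ℝ)/2) * (DH eps t)^(-(n:ℝ)/2)) * Real.exp (-(C/2))
          = ((2*π)^(-(n:ℝ)/2) * (DH eps t)^(-(n:ℝ)/2))
            * (((1:ℝ)+d)^((n:ℝ)/2) * (1+d)^(-(n:ℝ)/2))
            * (Real.exp (C/2) * Real.exp (-(C/2))) := by ring
        _ = (2*π*DH eps t)^(-(n:ℝ)/2) := by rw [eK1, eK2, eK3]; ring
    rw [e1, e2, gaussPdf]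
    have hKK : Real.sqrt K * Real.sqrt K = K := Real.mul_self_sqrt hK0.le
    calc Real.sqrt K * (1+d*t)^(-(n:ℝ)/2) * Real.exp (-(b1/2) * ‖x - p‖ ^ 2)
          * (Real.sqrt K * (1+d*(1-t))^(-(n:ℝ)/2) * Real.exp (-(b2/2) * ‖x - q‖ ^ 2))
        = (Real.sqrt K * Real.sqrt K) * ((1+d*t)^(-(n:ℝ)/2) * (1+d*(1-t))^(-(n:ℝ)/2))
          * (Real.exp (-(b1/2) * ‖x - p‖ ^ 2) * Real.exp (-(b2/2) * ‖x - q‖ ^ 2)) := by ring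
      _ = K * ((1+d)^(-(n:ℝ)/2) * (DH eps t)^(-(n:ℝ)/2))
          * (Real.exp (-‖x - ((1-t) • x0 + t • x1)‖ ^ 2 / (2 * DH eps t)) * Real.exp (-(C/2))) := by
          rw [hKK, hpow, hexp]
      _ = (K * ((1+d)^(-(n:ℝ)/2) * (DH eps t)^(-(n:ℝ)/2)) * Real.exp (-(C/2)))
          * Real.exp (-‖x - ((1-t) • x0 + t • x1)‖ ^ 2 / (2 * DH eps t)) := by ring
      _ = (2*π*DH eps t)^(-(n:ℝ)/2)
          * Real.exp (-‖x - ((1-t) • x0 + t • x1)‖ ^ 2 / (2 * DH eps t)) := by rw [hconst]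
  refine ⟨f0, g1, ?_, ?_, ?_, ?_, ?_, ?_, ?_, hDH0, hDH1⟩
  · exact (Continuous.measurable (by fun_prop))
  · exact (Continuous.measurable (by fun_prop))
  · intro x; rw [hf0]; positivity
  · intro x; rw [hg1]; positivity
  · refine Eventually.of_forall fun x => ?_
    have h := main 0 le_rfl zero_le_one x
    rw [mul_zero] at h
    rw [show heatT n 0 f0 x = f0 x from if_pos rfl] at h
    rw [show (1:ℝ) - 0 = 1 from by norm_num, mul_one, one_smul, zero_smul, add_zero, hDH0] at h
    exact h.symm
  · refine Eventually.of_forall fun x => ?_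
    have h := main 1 zero_le_one le_rfl x
    rw [show (1:ℝ) - 1 = 0 from by norm_num, mul_zero] at h
    rw [show heatT n 0 g1 x = g1 x from if_pos rfl] at h
    rw [mul_one, one_smul, zero_smul, zero_add, hDH1] at h
    exact (mul_comm (g1 x) (heatT n eps f0 x)) ▸ h.symm
  · rintro t ⟨ht0, ht1⟩
    rw [gaussM]
    congr 1
    funext x
    rw [main t ht0 ht1 x]
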